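/- arXiv:1610.03186 — 4 statements merged into one kernel-verified Lean document; each statement's English description precedes it below -/
import Mathlib

section
/- Let (a_i)_{i=1}^∞ be a sequence of nonnegative real numbers with Σ_{i=1}^∞ a_i < ∞, and let k ≥ 1 be an integer. Then (Σ_{i=1}^∞ a_i)^k ≤ k · Σ_{i=1}^∞ a_i (Σ_{j=1}^i a_j)^{k−1}. -/
lemma pow_sub_pow_le_aux (k : ℕ) (x y : ℝ) (hy : 0 ≤ y) (hxy : y ≤ x) :
    x ^ k - y ^ k ≤ (k : ℝ) * (x - y) * x ^ (k - 1) := by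
  have hx : 0 ≤ x := hy.trans hxy
  have hgeom := geom_sum₂_mul x y k
  have hbound : (∑ i ∈ Finset.range k, x ^ i * y ^ (k - 1 - i)) ≤ (k : ℝ) * x ^ (k - 1) := by
    calc (∑ i ∈ Finset.range k, x ^ i * y ^ (k - 1 - i))
        ≤ ∑ i ∈ Finset.range k, x ^ (k - 1) := by
          apply Finset.sum_le_sum
          intro i hi
          simp only [Finset.mem_range] at hi
          calc x ^ i * y ^ (k - 1 - i) ≤ x ^ i * x ^ (k - 1 - i) := by
                apply mul_le_mul_of_nonneg_left (pow_le_pow_left₀ hy hxy _) (pow_nonneg hx _)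
            _ = x ^ (i + (k - 1 - i)) := (pow_add x i _).symm
            _ = x ^ (k - 1) := by congr 1; omega
      _ = (k : ℝ) * x ^ (k - 1) := by simp [Finset.sum_const, mul_comm]
  calc x ^ k - y ^ k = (∑ i ∈ Finset.range k, x ^ i * y ^ (k - 1 - i)) * (x - y) := hgeom.symm
    _ ≤ ((k : ℝ) * x ^ (k - 1)) * (x - y) :=
        mul_le_mul_of_nonneg_right hbound (by linarith)
    _ = (k : ℝ) * (x - y) * x ^ (k - 1) := by ring


lemma partial_pow_bound (a : ℕ → ℝ) (ha : ∀ i, 0 ≤ a i) (k : ℕ) (hk : 1 ≤ k) (N : ℕ) :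
    (∑ j ∈ Finset.range (N + 1), a j) ^ k ≤
      (k : ℝ) * ∑ i ∈ Finset.range (N + 1),
        a i * (∑ j ∈ Finset.range (i + 1), a j) ^ (k - 1) := by
  have hk1 : (1 : ℝ) ≤ (k : ℝ) := by exact_mod_cast hk
  induction N with
  | zero =>
    simp only [zero_add, Finset.sum_range_one]
    have h0 : a 0 ^ k = a 0 * a 0 ^ (k - 1) := by
      rw [← pow_succ']
      congr 1; omega
    rw [h0]
    exact le_mul_of_one_le_left (mul_nonneg (ha 0) (pow_nonneg (ha 0) _)) hk1
  | succ n ih =>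
    have hPn : 0 ≤ ∑ j ∈ Finset.range (n + 1), a j :=
      Finset.sum_nonneg fun j _ => ha j
    have hmono : (∑ j ∈ Finset.range (n + 1), a j) ≤ ∑ j ∈ Finset.range (n + 2), a j := by
      rw [Finset.sum_range_succ _ (n + 1)]
      linarith [ha (n + 1)]
    have hstep := pow_sub_pow_le_aux k (∑ j ∈ Finset.range (n + 2), a j)
      (∑ j ∈ Finset.range (n + 1), a j) hPn hmono
    have hdiff : (∑ j ∈ Finset.range (n + 2), a j) - ∑ j ∈ Finset.range (n + 1), a j
        = a (n + 1) := by
      rw [Finset.sum_range_succ]; ring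
    rw [hdiff] at hstep
    rw [Finset.sum_range_succ
      (fun i => a i * (∑ j ∈ Finset.range (i + 1), a j) ^ (k - 1)) (n + 1), mul_add]
    have : (k : ℝ) * (a (n + 1) * (∑ j ∈ Finset.range (n + 2), a j) ^ (k - 1))
        = (k : ℝ) * a (n + 1) * (∑ j ∈ Finset.range (n + 2), a j) ^ (k - 1) := by ring
    rw [this]
    linarith

theorem tsum_pow_le_k_mul_tsum_partial (a : ℕ → ℝ) (ha : ∀ i, 0 ≤ a i)
    (hsum : Summable a) (k : ℕ) (hk : 1 ≤ k) :
    (∑' i, a i) ^ k ≤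
      (k : ℝ) * ∑' i, a i * (∑ j ∈ Finset.range (i + 1), a j) ^ (k - 1) := by
  have hPnonneg : ∀ n, (0:ℝ) ≤ ∑ j ∈ Finset.range (n + 1), a j :=
    fun n => Finset.sum_nonneg fun j _ => ha j
  have hfnonneg : ∀ i, 0 ≤ a i * (∑ j ∈ Finset.range (i + 1), a j) ^ (k - 1) :=
    fun i => mul_nonneg (ha i) (pow_nonneg (hPnonneg i) _)
  have hPle : ∀ n, (∑ j ∈ Finset.range (n + 1), a j) ≤ ∑' i, a i := fun n =>
    Summable.sum_le_tsum _ (fun j _ => ha j) hsum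
  have hfsum : Summable (fun i => a i * (∑ j ∈ Finset.range (i + 1), a j) ^ (k - 1)) := by
    apply Summable.of_nonneg_of_le hfnonneg (fun i => ?_) (hsum.mul_right ((∑' i, a i) ^ (k-1)))
    exact mul_le_mul_of_nonneg_left
      (pow_le_pow_left₀ (hPnonneg i) (hPle i) _) (ha i)
  have hfinle : ∀ N, (∑ j ∈ Finset.range (N + 1), a j) ^ k
      ≤ (k : ℝ) * ∑' i, a i * (∑ j ∈ Finset.range (i + 1), a j) ^ (k - 1) := by
    intro N
    refine (partial_pow_bound a ha k hk N).trans ?_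
    apply mul_le_mul_of_nonneg_left _ (by positivity)
    exact Summable.sum_le_tsum _ (fun j _ => hfnonneg j) hfsum
  have h1 : Filter.Tendsto (fun N => ∑ j ∈ Finset.range (N + 1), a j)
      Filter.atTop (nhds (∑' i, a i)) := by
    have h0 := hsum.hasSum.tendsto_sum_nat
    have h2 : Filter.Tendsto (fun n : ℕ => n + 1) Filter.atTop Filter.atTop :=
      Filter.tendsto_add_atTop_nat 1
    exact h0.comp h2
  exact le_of_tendsto (h1.pow k) (Filter.Eventually.of_forall hfinle)
end

section
/- Weighted weak (1,1) Fefferman–Stein inequality: there is a constant C > 0 depending only on the dimension n such that for every weight w on ℝ^n, every locally integrable f, and every t > 0, t · w({x ∈ ℝ^n : M_Q f(x) > t}) ≤ C ∫_{ℝ^n} |f(x)| M_Q w(x) dx. -/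
/-!
Every point of `{M f > t}` lies in a cube `Q` (an open ball of the sup metric) with
`t |Q| < ∫_Q |f|`. Since `y ∈ Q ⊆ 5Q` gives `⨍_{5Q} w ≤ M w (y)`,
`t · w(5Q) = 5ⁿ (t |Q|) ⨍_{5Q} w ≤ 5ⁿ ∫_Q |f| ⨍_{5Q} w ≤ 5ⁿ ∫_Q |f| M w`.
Among such cubes of radius at most `k`, the Vitali covering lemma picks disjoint `Qᵢ` whose
enlargements `5Qᵢ` cover the points they serve; summing the estimate over the `Qᵢ` and letting
`k → ∞` (continuity from below) gives the bound.
-/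

open MeasureTheory Set
open scoped ENNReal

noncomputable section

/-- A cube in `ℝⁿ` with sides parallel to the axes. -/
def IsCube (n : ℕ) (Q : Set (Fin n → ℝ)) : Prop :=
  ∃ (a : Fin n → ℝ) (r : ℝ), 0 < r ∧ Q = Set.univ.pi fun i => Set.Ioo (a i) (a i + r)

/-- The Hardy–Littlewood maximal operator over cubes in `ℝⁿ`. -/
def MHL {n : ℕ} (f : (Fin n → ℝ) → ℝ) (x : Fin n → ℝ) : ℝ≥0∞ :=
  ⨆ (Q : Set (Fin n → ℝ)) (_ : IsCube n Q ∧ x ∈ Q),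
    (∫⁻ y in Q, ENNReal.ofReal |f y|) / volume Q

open Metric

section Vitali

variable {α : Type*} [MetricSpace α] [TopologicalSpace.SeparableSpace α] [MeasurableSpace α]
  [OpensMeasurableSpace α] {μ ν : Measure α} {g : α → ℝ≥0∞} {s : Set α}

theorem measure_le_lintegral_of_forall_ball_of_radius_le {c : α → α} {ρ : α → ℝ} {R : ℝ}
    (hρ : ∀ x ∈ s, 0 < ρ x ∧ ρ x ≤ R) (hmem : ∀ x ∈ s, x ∈ ball (c x) (ρ x))
    (hν : ∀ x ∈ s, ν (ball (c x) (5 * ρ x)) ≤ ∫⁻ y in ball (c x) (ρ x), g y ∂μ) :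
    ν s ≤ ∫⁻ y, g y ∂μ := by
  obtain ⟨u, hus, hdisj, hcov⟩ := Vitali.exists_disjoint_subfamily_covering_enlargement_closedBall
    s c ρ R (fun x hx => (hρ x hx).2) 4 (by norm_num)
  have hu : u.Countable := hdisj.countable_of_nonempty_interior fun x hx =>
    ⟨x, ball_subset_interior_closedBall (hmem x (hus hx))⟩
  have hcover : s ⊆ ⋃ x ∈ u, ball (c x) (5 * ρ x) := by
    intro y hy
    obtain ⟨x, hx, hsub⟩ := hcov y hy
    exact mem_biUnion hx <| closedBall_subset_ball (by linarith [(hρ x (hus hx)).1])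
      (hsub (ball_subset_closedBall (hmem y hy)))
  calc ν s ≤ ∑' x : u, ν (ball (c x) (5 * ρ x)) :=
        (measure_mono hcover).trans (measure_biUnion_le _ hu _)
    _ ≤ ∑' x : u, ∫⁻ y in ball (c x) (ρ x), g y ∂μ :=
        ENNReal.tsum_le_tsum fun x => hν x (hus x.2)
    _ = ∫⁻ y in ⋃ x ∈ u, ball (c x) (ρ x), g y ∂μ :=
        (lintegral_biUnion hu (fun _ _ => measurableSet_ball)
          (hdisj.mono fun _ => ball_subset_closedBall) g).symm
    _ ≤ ∫⁻ y, g y ∂μ := setLIntegral_le_lintegral _ _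

theorem measure_le_lintegral_of_forall_ball
    (h : ∀ x ∈ s, ∃ c ρ, 0 < ρ ∧ x ∈ ball c ρ ∧
      ν (ball c (5 * ρ)) ≤ ∫⁻ y in ball c ρ, g y ∂μ) :
    ν s ≤ ∫⁻ y, g y ∂μ := by
  choose! c ρ hρ hmem hν using h
  let sₖ : ℕ → Set α := fun k => {x ∈ s | ρ x ≤ k}
  have hmono : Monotone sₖ := fun k l hkl x hx => ⟨hx.1, hx.2.trans (by exact_mod_cast hkl)⟩
  have hs : s ⊆ ⋃ k, sₖ k := fun x hx => mem_iUnion.2 ⟨⌈ρ x⌉₊, hx, Nat.le_ceil _⟩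
  calc ν s ≤ ν (⋃ k, sₖ k) := measure_mono hs
    _ = ⨆ k, ν (sₖ k) := hmono.measure_iUnion
    _ ≤ ∫⁻ y, g y ∂μ := iSup_le fun k =>
        measure_le_lintegral_of_forall_ball_of_radius_le (fun x hx => ⟨hρ x hx.1, hx.2⟩)
          (fun x hx => hmem x hx.1) (fun x hx => hν x hx.1)

end Vitali

section Cube

variable {n : ℕ}

theorem isCube_ball (c : Fin n → ℝ) {ρ : ℝ} (hρ : 0 < ρ) : IsCube n (ball c ρ) := by
  refine ⟨fun i => c i - ρ, 2 * ρ, by linarith, ?_⟩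
  rw [ball_pi _ hρ]
  refine congrArg (univ.pi ·) (funext fun i => ?_)
  rw [Real.ball_eq_Ioo]
  congr 1; ring

theorem IsCube.exists_eq_ball {Q : Set (Fin n → ℝ)} (hQ : IsCube n Q) :
    ∃ c ρ, 0 < ρ ∧ Q = ball c ρ := by
  obtain ⟨a, r, hr, rfl⟩ := hQ
  refine ⟨fun i => a i + r / 2, r / 2, by linarith, ?_⟩
  rw [ball_pi _ (by linarith)]
  refine congrArg (univ.pi ·) (funext fun i => ?_)
  rw [Real.ball_eq_Ioo]
  congr 1 <;> ring

theorem volume_pi_ball_mul {K ρ : ℝ} (c : Fin n → ℝ) (hK : 0 < K) (hρ : 0 < ρ) :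
    volume (ball c (K * ρ)) = ENNReal.ofReal (K ^ n) * volume (ball c ρ) := by
  rw [Real.volume_pi_ball c (by positivity), Real.volume_pi_ball c hρ, Fintype.card_fin,
    ← ENNReal.ofReal_mul (by positivity), ← mul_pow, mul_left_comm]

theorem div_volume_le_MHL (f : (Fin n → ℝ) → ℝ) {Q : Set (Fin n → ℝ)} {x : Fin n → ℝ}
    (hQ : IsCube n Q) (hx : x ∈ Q) :
    (∫⁻ y in Q, ENNReal.ofReal |f y|) / volume Q ≤ MHL f x :=
  le_iSup₂_of_le Q ⟨hQ, hx⟩ le_rfl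

theorem exists_ball_of_lt_MHL {f : (Fin n → ℝ) → ℝ} {x : Fin n → ℝ} {t : ℝ≥0∞}
    (h : t < MHL f x) :
    ∃ c ρ, 0 < ρ ∧ x ∈ ball c ρ ∧
      t * volume (ball c ρ) < ∫⁻ y in ball c ρ, ENNReal.ofReal |f y| := by
  simp only [MHL, lt_iSup_iff] at h
  obtain ⟨Q, ⟨hQ, hxQ⟩, hlt⟩ := h
  obtain ⟨c, ρ, hρ, rfl⟩ := hQ.exists_eq_ball
  refine ⟨c, ρ, hρ, hxQ, ?_⟩
  rwa [← ENNReal.lt_div_iff_mul_lt (.inl (measure_ball_pos volume c hρ).ne')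
    (.inl measure_ball_lt_top.ne)]

theorem mul_lintegral_ball_five_le (f w : (Fin n → ℝ) → ℝ) {c : Fin n → ℝ} {ρ : ℝ}
    (hρ : 0 < ρ) {t : ℝ≥0∞}
    (ht : t * volume (ball c ρ) ≤ ∫⁻ y in ball c ρ, ENNReal.ofReal |f y|) :
    t * ∫⁻ y in ball c (5 * ρ), ENNReal.ofReal |w y| ≤
      ∫⁻ y in ball c ρ, ENNReal.ofReal (5 ^ n) * (ENNReal.ofReal |f y| * MHL w y) := by
  set A := ∫⁻ y in ball c (5 * ρ), ENNReal.ofReal |w y|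
  set V := volume (ball c (5 * ρ))
  have hA : A = A / V * (ENNReal.ofReal (5 ^ n) * volume (ball c ρ)) := by
    rw [← volume_pi_ball_mul c (by norm_num) hρ]
    exact (ENNReal.div_mul_cancel (measure_ball_pos volume c (by positivity)).ne'
      measure_ball_lt_top.ne).symm
  have hMw : ∀ y ∈ ball c ρ, A / V ≤ MHL w y := fun y hy =>
    div_volume_le_MHL w (isCube_ball c (by positivity))
      (ball_subset_ball (by linarith) hy)
  calc t * A = ENNReal.ofReal (5 ^ n) * (t * volume (ball c ρ) * (A / V)) := by
        nth_rw 1 [hA]; ring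
    _ ≤ ENNReal.ofReal (5 ^ n) * ((∫⁻ y in ball c ρ, ENNReal.ofReal |f y|) * (A / V)) := by
        gcongr
    _ ≤ ENNReal.ofReal (5 ^ n) * ∫⁻ y in ball c ρ, ENNReal.ofReal |f y| * (A / V) := by
        gcongr; exact lintegral_mul_const_le _ _
    _ ≤ ENNReal.ofReal (5 ^ n) * ∫⁻ y in ball c ρ, ENNReal.ofReal |f y| * MHL w y := by
        gcongr _ * ?_
        exact setLIntegral_mono' measurableSet_ball fun y hy => by gcongr; exact hMw y hy
    _ = ∫⁻ y in ball c ρ, ENNReal.ofReal (5 ^ n) * (ENNReal.ofReal |f y| * MHL w y) :=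
        (lintegral_const_mul' _ _ ENNReal.ofReal_ne_top).symm

end Cube

/-- The weak (1,1) Fefferman–Stein inequality. -/
theorem fefferman_stein_weak (n : ℕ) :
    ∃ C : ℝ, 0 < C ∧
      ∀ (w f : (Fin n → ℝ) → ℝ), (∀ x, 0 ≤ w x) → LocallyIntegrable w volume →
        LocallyIntegrable f volume → ∀ t : ℝ, 0 < t →
          ENNReal.ofReal t *
              (∫⁻ x in {x | ENNReal.ofReal t < MHL f x}, ENNReal.ofReal (w x)) ≤
            ENNReal.ofReal C * ∫⁻ x, ENNReal.ofReal |f x| * MHL w x := by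
  refine ⟨5 ^ n, by positivity, fun w f _ _ _ t _ => ?_⟩
  set E := {x | ENNReal.ofReal t < MHL f x}
  let ν := ENNReal.ofReal t • volume.withDensity fun x => ENNReal.ofReal |w x|
  have hν : ν E ≤ ∫⁻ x, ENNReal.ofReal (5 ^ n) * (ENNReal.ofReal |f x| * MHL w x) := by
    refine measure_le_lintegral_of_forall_ball fun x hx => ?_
    obtain ⟨c, ρ, hρ, hxB, hlt⟩ := exists_ball_of_lt_MHL hx
    refine ⟨c, ρ, hρ, hxB, ?_⟩
    rw [Measure.smul_apply, withDensity_apply _ measurableSet_ball, smul_eq_mul]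
    exact mul_lintegral_ball_five_le f w hρ hlt.le
  calc ENNReal.ofReal t * ∫⁻ x in E, ENNReal.ofReal (w x)
      ≤ ENNReal.ofReal t * ∫⁻ x in E, ENNReal.ofReal |w x| := by
        gcongr with x; exact le_abs_self _
    _ ≤ ν E := by
        rw [Measure.smul_apply, smul_eq_mul]; gcongr; exact withDensity_apply_le _ _
    _ ≤ _ := hν
    _ = _ := lintegral_const_mul' _ _ ENNReal.ofReal_ne_top
end
end

section
/- Let R̃_1, …, R̃_N be dyadic rectangles in ℝ^2 (products of dyadic intervals) with long side in the x₁-direction, ordered so that the lengths |P₁(R̃_i)| of their first-coordinate projections are non-increasing, and satisfying |R̃_i ∩ ⋃_{j<i} R̃_j| < (1/3)|R̃_i| for i = 2, …, N. Then for each i and each integer n ≥ 1, the set X_{i,n} = {x ∈ R̃_i : Σ_{j=1}^i 𝟙_{R̃_j}(x) ≥ n} satisfies |X_{i,n}| ≤ 3^{1−n}|R̃_i|. -/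
/-!
Dyadic intervals are nested or disjoint. Write `R i = I i × J i`. Since the long sides shrink
along the order, a rectangle `R l` meeting a later `R j` has `I j ⊆ I l`; the selection condition
forbids `R j ⊆ R l`, so `J l ⊆ J j`, and likewise among earlier rectangles meeting `R j` whose
`J`-intervals meet, the later one has the larger `J`-interval. Over `I j` the earlier rectangles
are thus strips `I j × J l`, and the bound becomes one-dimensional: the set of `y ∈ J j` lying in
at least `n` of the `J l` has measure at most `3⁻ⁿ |J j|`. By induction on `n`: such a point with
`n + 1` covers lies in the `J l` of the last covering `l`, whose `J`-interval is maximal and which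
sees the other `n` as its own earlier covers; the maximal `J l` are disjoint, and the selection
condition bounds the measure of their union by `|J j| / 3`.
-/

open MeasureTheory Set
open scoped ENNReal Classical

noncomputable section

/-- The dyadic interval `[m·2^k, (m+1)·2^k)`. -/
def dInt (m k : ℤ) : Set ℝ := Set.Ico ((m : ℝ) * 2 ^ k) (((m : ℝ) + 1) * 2 ^ k)

open scoped Finset

lemma mem_dInt_iff {x : ℝ} {m k : ℤ} : x ∈ dInt m k ↔ ⌊x / 2 ^ k⌋ = m := by
  have h2k : (0 : ℝ) < 2 ^ k := zpow_pos two_pos k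
  rw [Int.floor_eq_iff, dInt, mem_Ico, le_div_iff₀ h2k, div_lt_iff₀ h2k]

lemma dInt_nonempty (m k : ℤ) : (dInt m k).Nonempty :=
  ⟨m * 2 ^ k, mem_dInt_iff.2 <| by
    rw [mul_div_cancel_right₀ _ (zpow_ne_zero k two_ne_zero), Int.floor_intCast]⟩

lemma measurableSet_dInt (m k : ℤ) : MeasurableSet (dInt m k) := measurableSet_Ico

lemma volume_dInt (m k : ℤ) : volume (dInt m k) = ENNReal.ofReal (2 ^ k) := by
  rw [dInt, Real.volume_Ico]; ring_nf

lemma volume_dInt_ne_zero (m k : ℤ) : volume (dInt m k) ≠ 0 := by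
  simpa [volume_dInt] using zpow_pos two_pos k

lemma volume_dInt_ne_top (m k : ℤ) : volume (dInt m k) ≠ ∞ := by
  simp [volume_dInt]

lemma floor_div_two_zpow_add (y : ℝ) (k : ℤ) (d : ℕ) :
    ⌊y / 2 ^ (k + d)⌋ = ⌊y / 2 ^ k⌋ / (2 ^ d : ℕ) := by
  rw [← Int.floor_div_natCast, zpow_add₀ two_ne_zero, div_mul_eq_div_div]
  norm_cast

lemma dInt_subset_of_le {m m' k k' : ℤ} (hk : k ≤ k') (hne : (dInt m k ∩ dInt m' k').Nonempty) :
    dInt m k ⊆ dInt m' k' := by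
  obtain ⟨d, rfl⟩ : ∃ d : ℕ, k' = k + d := ⟨(k' - k).toNat, by omega⟩
  obtain ⟨x, hx, hx'⟩ := hne
  intro y hy
  rw [mem_dInt_iff, floor_div_two_zpow_add] at hx' ⊢
  rw [mem_dInt_iff] at hx hy
  rw [hy, ← hx, hx']

lemma dInt_subset_or_subset {m m' k k' : ℤ} (hne : (dInt m k ∩ dInt m' k').Nonempty) :
    dInt m k ⊆ dInt m' k' ∨ dInt m' k' ⊆ dInt m k :=
  (le_total k k').imp (dInt_subset_of_le · hne) (dInt_subset_of_le · (inter_comm .. ▸ hne))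

lemma volume_prod_set {α β : Type*} [MeasureSpace α] [MeasureSpace β]
    [SFinite (volume : Measure β)] (s : Set α) (t : Set β) :
    volume (s ×ˢ t) = volume s * volume t :=
  Measure.prod_prod s t

section Family

variable {ι : Type*}

def dyadicRect (a b : ι → ℤ × ℤ) (i : ι) : Set (ℝ × ℝ) :=
  dInt (a i).1 (a i).2 ×ˢ dInt (b i).1 (b i).2

variable {a b : ι → ℤ × ℤ}

lemma volume_dyadicRect (i : ι) :
    volume (dyadicRect a b i) =
      volume (dInt (a i).1 (a i).2) * volume (dInt (b i).1 (b i).2) := by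
  rw [dyadicRect, volume_prod_set]

lemma dyadicRect_inter_nonempty_iff {l m : ι} :
    (dyadicRect a b l ∩ dyadicRect a b m).Nonempty ↔
      (dInt (a l).1 (a l).2 ∩ dInt (a m).1 (a m).2).Nonempty ∧
        (dInt (b l).1 (b l).2 ∩ dInt (b m).1 (b m).2).Nonempty := by
  rw [dyadicRect, dyadicRect, prod_inter_prod, prod_nonempty_iff]

variable [LinearOrder ι]

lemma dInt_fst_subset_of_le (ha : Antitone fun i => (a i).2) {l m : ι} (hlm : l ≤ m)
    (hne : (dyadicRect a b l ∩ dyadicRect a b m).Nonempty) :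
    dInt (a m).1 (a m).2 ⊆ dInt (a l).1 (a l).2 :=
  dInt_subset_of_le (ha hlm) (inter_comm .. ▸ (dyadicRect_inter_nonempty_iff.1 hne).1)

lemma dyadicRect_inter_nonempty_of_le (ha : Antitone fun i => (a i).2) {j l m : ι}
    (hlj : l ≤ j) (hmj : m ≤ j) (hl : (dyadicRect a b l ∩ dyadicRect a b j).Nonempty)
    (hm : (dyadicRect a b m ∩ dyadicRect a b j).Nonempty)
    (hJ : (dInt (b l).1 (b l).2 ∩ dInt (b m).1 (b m).2).Nonempty) :
    (dyadicRect a b l ∩ dyadicRect a b m).Nonempty := by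
  obtain ⟨x, hx⟩ := dInt_nonempty (a j).1 (a j).2
  obtain ⟨y, hyl, hym⟩ := hJ
  exact ⟨(x, y), ⟨dInt_fst_subset_of_le ha hlj hl hx, hyl⟩,
    dInt_fst_subset_of_le ha hmj hm hx, hym⟩

structure IsSparseDyadicFamily (a b : ι → ℤ × ℤ) : Prop where
  antitone : Antitone fun i => (a i).2
  volume_inter_le : ∀ i, volume (dyadicRect a b i ∩ ⋃ j < i, dyadicRect a b j) ≤
    3⁻¹ * volume (dyadicRect a b i)

namespace IsSparseDyadicFamily

lemma not_subset (h : IsSparseDyadicFamily a b) {l m : ι} (hlm : l < m) :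
    ¬ dyadicRect a b m ⊆ dyadicRect a b l := by
  intro hsub
  have hpos : volume (dyadicRect a b m) ≠ 0 := by
    rw [volume_dyadicRect]
    exact mul_ne_zero (volume_dInt_ne_zero _ _) (volume_dInt_ne_zero _ _)
  have hfin : volume (dyadicRect a b m) ≠ ∞ := by
    rw [volume_dyadicRect]
    exact ENNReal.mul_ne_top (volume_dInt_ne_top _ _) (volume_dInt_ne_top _ _)
  have hle : 1 * volume (dyadicRect a b m) ≤ 3⁻¹ * volume (dyadicRect a b m) := by
    have hcov : dyadicRect a b m ⊆ dyadicRect a b m ∩ ⋃ j < m, dyadicRect a b j :=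
      fun x hx => ⟨hx, mem_iUnion₂.2 ⟨l, hlm, hsub hx⟩⟩
    rw [one_mul]
    exact (measure_mono hcov).trans (h.volume_inter_le m)
  have := (ENNReal.mul_le_mul_iff_left hpos hfin).1 hle
  norm_num at this

lemma dInt_snd_subset (h : IsSparseDyadicFamily a b) {l m : ι} (hlm : l < m)
    (hne : (dyadicRect a b l ∩ dyadicRect a b m).Nonempty) :
    dInt (b l).1 (b l).2 ⊆ dInt (b m).1 (b m).2 :=
  (dInt_subset_or_subset (dyadicRect_inter_nonempty_iff.1 hne).2).resolve_right fun hJ =>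
    h.not_subset hlm (prod_mono (dInt_fst_subset_of_le h.antitone hlm.le hne) hJ)

end IsSparseDyadicFamily

variable [Fintype ι]

def priorMeets (a b : ι → ℤ × ℤ) (j : ι) : Finset ι :=
  {l | l < j ∧ (dyadicRect a b l ∩ dyadicRect a b j).Nonempty}

def priorCovers (a b : ι → ℤ × ℤ) (j : ι) (y : ℝ) : Finset ι :=
  {l ∈ priorMeets a b j | y ∈ dInt (b l).1 (b l).2}

/-- Among the earlier rectangles meeting `R j`, intersecting `J`-intervals grow with the index
(`IsSparseDyadicFamily.dInt_snd_subset`), so these are the ones with a maximal `J`-interval. -/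
def lastPriorMeets (a b : ι → ℤ × ℤ) (j : ι) : Finset ι :=
  {l ∈ priorMeets a b j | ∀ m ∈ priorMeets a b j, l < m →
    Disjoint (dInt (b l).1 (b l).2) (dInt (b m).1 (b m).2)}

@[simp]
lemma mem_priorMeets {j l : ι} :
    l ∈ priorMeets a b j ↔ l < j ∧ (dyadicRect a b l ∩ dyadicRect a b j).Nonempty := by
  simp [priorMeets]

@[simp]
lemma mem_priorCovers {j l : ι} {y : ℝ} :
    l ∈ priorCovers a b j y ↔ l ∈ priorMeets a b j ∧ y ∈ dInt (b l).1 (b l).2 :=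
  Finset.mem_filter

lemma self_notMem_priorCovers (j : ι) (y : ℝ) : j ∉ priorCovers a b j y := by
  simp

lemma lastPriorMeets_subset_priorMeets (j : ι) : lastPriorMeets a b j ⊆ priorMeets a b j :=
  Finset.filter_subset _ _

lemma pairwiseDisjoint_lastPriorMeets (j : ι) :
    (lastPriorMeets a b j : Set ι).PairwiseDisjoint fun l => dInt (b l).1 (b l).2 := by
  intro l hl m hm hlm
  rw [Finset.mem_coe, lastPriorMeets, Finset.mem_filter] at hl hm
  rcases hlm.lt_or_gt with hlm | hml
  · exact hl.2 m hm.1 hlm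
  · exact (hm.2 l hl.1 hml).symm

lemma insert_priorCovers_eq (ha : Antitone fun i => (a i).2) {j : ι} {x : ℝ × ℝ}
    (hx : x ∈ dyadicRect a b j) :
    ({l | l ≤ j ∧ x ∈ dyadicRect a b l} : Finset ι) = insert j (priorCovers a b j x.2) := by
  ext l
  simp only [priorCovers, priorMeets, Finset.mem_filter, Finset.mem_univ, true_and,
    Finset.mem_insert]
  constructor
  · rintro ⟨hlj, hxl⟩
    rcases hlj.eq_or_lt with rfl | hlt
    · exact .inl rfl
    · exact .inr ⟨⟨hlt, x, hxl, hx⟩, hxl.2⟩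
  · rintro (rfl | ⟨⟨hlt, hne⟩, hy⟩)
    · exact ⟨le_rfl, hx⟩
    · exact ⟨hlt.le, dInt_fst_subset_of_le ha hlt.le hne hx.1, hy⟩

lemma erase_max'_priorCovers_subset (ha : Antitone fun i => (a i).2) {j : ι} {y : ℝ}
    (hy : (priorCovers a b j y).Nonempty) :
    (priorCovers a b j y).erase ((priorCovers a b j y).max' hy) ⊆
      priorCovers a b ((priorCovers a b j y).max' hy) y := by
  set l := (priorCovers a b j y).max' hy
  obtain ⟨hlP, hyl⟩ := mem_priorCovers.1 (Finset.max'_mem _ hy)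
  obtain ⟨hlj, hlR⟩ := mem_priorMeets.1 hlP
  intro m hm
  obtain ⟨hml, hmC⟩ := Finset.mem_erase.1 hm
  obtain ⟨hmP, hym⟩ := mem_priorCovers.1 hmC
  obtain ⟨hmj, hmR⟩ := mem_priorMeets.1 hmP
  refine mem_priorCovers.2 ⟨mem_priorMeets.2 ⟨(Finset.le_max' _ m hmC).lt_of_ne hml, ?_⟩, hym⟩
  exact dyadicRect_inter_nonempty_of_le ha hmj.le hlj.le hmR hlR ⟨y, hym, hyl⟩

lemma sep_le_card_eq_prod (ha : Antitone fun i => (a i).2) (j : ι) (n : ℕ) :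
    {x ∈ dyadicRect a b j | n + 1 ≤ #({l | l ≤ j ∧ x ∈ dyadicRect a b l} : Finset ι)} =
      dInt (a j).1 (a j).2 ×ˢ {y ∈ dInt (b j).1 (b j).2 | n ≤ #(priorCovers a b j y)} := by
  ext x
  have hj := self_notMem_priorCovers (a := a) (b := b) j x.2
  constructor
  · rintro ⟨hx, hn⟩
    rw [insert_priorCovers_eq ha hx, Finset.card_insert_of_notMem hj] at hn
    exact ⟨hx.1, hx.2, by omega⟩
  · rintro ⟨hxa, hxb, hn⟩
    have hx : x ∈ dyadicRect a b j := ⟨hxa, hxb⟩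
    refine ⟨hx, ?_⟩
    rw [insert_priorCovers_eq ha hx, Finset.card_insert_of_notMem hj]
    omega

namespace IsSparseDyadicFamily

lemma volume_biUnion_priorMeets_le (h : IsSparseDyadicFamily a b) (j : ι) :
    volume (⋃ l ∈ priorMeets a b j, dInt (b l).1 (b l).2) ≤
      3⁻¹ * volume (dInt (b j).1 (b j).2) := by
  have hsub : dInt (a j).1 (a j).2 ×ˢ (⋃ l ∈ priorMeets a b j, dInt (b l).1 (b l).2) ⊆
      dyadicRect a b j ∩ ⋃ l < j, dyadicRect a b l := by
    rintro ⟨x, y⟩ ⟨hx, hy⟩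
    obtain ⟨l, hl, hyl⟩ := mem_iUnion₂.1 hy
    obtain ⟨hlj, hne⟩ := (Finset.mem_filter.1 hl).2
    exact ⟨⟨hx, h.dInt_snd_subset hlj hne hyl⟩,
      mem_iUnion₂.2 ⟨l, hlj, dInt_fst_subset_of_le h.antitone hlj.le hne hx, hyl⟩⟩
  have hle := (measure_mono hsub).trans (h.volume_inter_le j)
  rw [volume_prod_set, volume_dyadicRect, mul_left_comm] at hle
  exact (ENNReal.mul_le_mul_iff_right (volume_dInt_ne_zero _ _) (volume_dInt_ne_top _ _)).1 hle

lemma max'_mem_lastPriorMeets (h : IsSparseDyadicFamily a b) {j : ι} {y : ℝ}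
    (hy : (priorCovers a b j y).Nonempty) :
    (priorCovers a b j y).max' hy ∈ lastPriorMeets a b j := by
  set l := (priorCovers a b j y).max' hy
  obtain ⟨hlP, hyl⟩ := mem_priorCovers.1 (Finset.max'_mem _ hy)
  refine Finset.mem_filter.2 ⟨hlP, fun m hmP hlm => ?_⟩
  refine disjoint_iff_inter_eq_empty.2 (not_nonempty_iff_eq_empty.1 fun hJ => ?_)
  have hne := dyadicRect_inter_nonempty_of_le h.antitone (mem_priorMeets.1 hlP).1.le
    (mem_priorMeets.1 hmP).1.le (mem_priorMeets.1 hlP).2 (mem_priorMeets.1 hmP).2 hJ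
  have hm : m ∈ priorCovers a b j y := mem_priorCovers.2 ⟨hmP, h.dInt_snd_subset hlm hne hyl⟩
  exact (Finset.le_max' _ m hm).not_gt hlm

lemma setOf_lt_card_priorCovers_subset (h : IsSparseDyadicFamily a b) (n : ℕ) (j : ι) :
    {y | n < #(priorCovers a b j y)} ⊆
      ⋃ l ∈ lastPriorMeets a b j, {y ∈ dInt (b l).1 (b l).2 | n ≤ #(priorCovers a b l y)} := by
  intro y hy
  have hne : (priorCovers a b j y).Nonempty := Finset.card_pos.1 (n.zero_le.trans_lt hy)
  refine mem_iUnion₂.2 ⟨_, h.max'_mem_lastPriorMeets hne, ?_, ?_⟩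
  · exact (Finset.mem_filter.1 (Finset.max'_mem _ hne)).2
  · calc n ≤ #((priorCovers a b j y).erase ((priorCovers a b j y).max' hne)) := by
          rw [Finset.card_erase_of_mem (Finset.max'_mem _ hne)]; exact Nat.le_sub_one_of_lt hy
      _ ≤ _ := Finset.card_le_card (erase_max'_priorCovers_subset h.antitone hne)

lemma volume_le_card_priorCovers_le (h : IsSparseDyadicFamily a b) (n : ℕ) (j : ι) :
    volume {y ∈ dInt (b j).1 (b j).2 | n ≤ #(priorCovers a b j y)} ≤
      3⁻¹ ^ n * volume (dInt (b j).1 (b j).2) := by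
  induction n generalizing j with
  | zero => rw [pow_zero, one_mul]; exact measure_mono (sep_subset _ _)
  | succ n ih =>
    calc volume {y ∈ dInt (b j).1 (b j).2 | n + 1 ≤ #(priorCovers a b j y)}
        ≤ volume (⋃ l ∈ lastPriorMeets a b j,
            {y ∈ dInt (b l).1 (b l).2 | n ≤ #(priorCovers a b l y)}) :=
          measure_mono fun y hy => h.setOf_lt_card_priorCovers_subset n j hy.2
      _ ≤ ∑ l ∈ lastPriorMeets a b j,
            volume {y ∈ dInt (b l).1 (b l).2 | n ≤ #(priorCovers a b l y)} :=
          measure_biUnion_finset_le _ _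
      _ ≤ ∑ l ∈ lastPriorMeets a b j, 3⁻¹ ^ n * volume (dInt (b l).1 (b l).2) :=
          Finset.sum_le_sum fun l _ => ih l
      _ = 3⁻¹ ^ n * volume (⋃ l ∈ lastPriorMeets a b j, dInt (b l).1 (b l).2) := by
          rw [← Finset.mul_sum, measure_biUnion_finset (pairwiseDisjoint_lastPriorMeets j)
            fun l _ => measurableSet_dInt _ _]
      _ ≤ 3⁻¹ ^ n * volume (⋃ l ∈ priorMeets a b j, dInt (b l).1 (b l).2) := by
          gcongr 3⁻¹ ^ n * volume ?_
          exact iUnion₂_mono' fun l hl => ⟨l, lastPriorMeets_subset_priorMeets j hl, subset_rfl⟩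
      _ ≤ 3⁻¹ ^ n * (3⁻¹ * volume (dInt (b j).1 (b j).2)) := by
          gcongr; exact h.volume_biUnion_priorMeets_le j
      _ = 3⁻¹ ^ (n + 1) * volume (dInt (b j).1 (b j).2) := by rw [pow_succ, mul_assoc]

end IsSparseDyadicFamily

end Family

lemma IsSparseDyadicFamily.of_fin {N : ℕ} {a b : Fin N → ℤ × ℤ}
    (ha : Antitone fun i => (a i).2)
    (hsel : ∀ i : Fin N, 0 < (i : ℕ) →
      volume (dyadicRect a b i ∩ ⋃ j : {j : Fin N // (j : ℕ) < (i : ℕ)}, dyadicRect a b j) <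
        3⁻¹ * volume (dyadicRect a b i)) :
    IsSparseDyadicFamily a b := by
  refine ⟨ha, fun i => ?_⟩
  have hU : ⋃ j < i, dyadicRect a b j =
      ⋃ j : {j : Fin N // (j : ℕ) < (i : ℕ)}, dyadicRect a b j := by
    rw [iUnion_subtype]; rfl
  rcases (i : ℕ).eq_zero_or_pos with hi | hi
  · have hU₀ : ⋃ j < i, dyadicRect a b j = ∅ :=
      iUnion_eq_empty.2 fun j => iUnion_eq_empty.2 fun hj =>
        (Nat.not_lt_zero _ (hi ▸ Fin.lt_def.1 hj)).elim
    rw [hU₀, inter_empty, measure_empty]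
    exact zero_le
  · exact hU ▸ (hsel i hi).le

theorem dyadic_multiplicity_bound_general (N : ℕ) (a b : Fin N → ℤ × ℤ)
    (R : Fin N → Set (ℝ × ℝ))
    (hR : ∀ i, R i = dInt (a i).1 (a i).2 ×ˢ dInt (b i).1 (b i).2)
    (hmono : ∀ i j : Fin N, i ≤ j → (a j).2 ≤ (a i).2)
    (hsel : ∀ i : Fin N, 0 < (i : ℕ) →
      volume (R i ∩ ⋃ j : {j : Fin N // (j : ℕ) < (i : ℕ)}, R j) < 3⁻¹ * volume (R i)) :
    ∀ (i : Fin N) (n : ℕ), 1 ≤ n →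
      volume {x ∈ R i |
          n ≤ (Finset.univ.filter fun j : Fin N => j ≤ i ∧ x ∈ R j).card} ≤
        (3 : ℝ≥0∞) ^ (1 - (n : ℤ)) * volume (R i) := by
  obtain rfl : R = dyadicRect a b := funext hR
  have h := IsSparseDyadicFamily.of_fin hmono hsel
  intro i n hn
  obtain ⟨n, rfl⟩ : ∃ k, n = k + 1 := ⟨n - 1, by omega⟩
  have hexp : (3 : ℝ≥0∞) ^ (1 - ((n + 1 : ℕ) : ℤ)) = 3⁻¹ ^ n := by
    rw [show 1 - ((n + 1 : ℕ) : ℤ) = -n by push_cast; ring, ENNReal.zpow_neg, zpow_natCast,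
      ENNReal.inv_pow]
  rw [sep_le_card_eq_prod h.antitone, volume_prod_set, volume_dyadicRect, hexp, mul_left_comm]
  gcongr
  exact h.volume_le_card_priorCovers_le n i

/-- Multiplicity bound for a selected family of dyadic rectangles:
`R i = I i × J i` are dyadic rectangles with long side in the `x₁`-direction
(side length exponents `(a i).2` for `I i` and `(b i).2` for `J i`), with
non-increasing long side lengths, such that each rectangle meets the union of
the previous ones in less than a third of its measure.  Then the set of points
of `R i` covered at least `n` times by `R 1, …, R i` has measure at most
`3^{1-n} |R i|`. -/
theorem dyadic_multiplicity_bound (N : ℕ) (a b : Fin N → ℤ × ℤ)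
    (R : Fin N → Set (ℝ × ℝ))
    (hR : ∀ i, R i = dInt (a i).1 (a i).2 ×ˢ dInt (b i).1 (b i).2)
    (hlong : ∀ i, (b i).2 ≤ (a i).2)
    (hmono : ∀ i j : Fin N, i ≤ j → (a j).2 ≤ (a i).2)
    (hsel : ∀ i : Fin N, 0 < (i : ℕ) →
      volume (R i ∩ ⋃ j : {j : Fin N // (j : ℕ) < (i : ℕ)}, R j) < 3⁻¹ * volume (R i)) :
    ∀ (i : Fin N) (n : ℕ), 1 ≤ n →
      volume {x ∈ R i |
          n ≤ (Finset.univ.filter fun j : Fin N => j ≤ i ∧ x ∈ R j).card} ≤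
        (3 : ℝ≥0∞) ^ (1 - (n : ℤ)) * volume (R i) :=
  dyadic_multiplicity_bound_general N a b R hR hmono hsel
end
end

section
/- Under the hypotheses of the exponential multiplicity bound (dyadic rectangles R̃_1, …, R̃_N with non-increasing long sides and |R̃_i ∩ ⋃_{j<i} R̃_j| < (1/3)|R̃_i|), for every integer k ≥ 1 and every i, ∫_{R̃_i} (Σ_{j=1}^i 𝟙_{R̃_j}(x))^{k−1} dx ≤ |R̃_i| Σ_{n=1}^∞ n^{k−1} 3^{1−n}. -/
/-!
If `x ∈ R i` also lies in an earlier `R j`, then the horizontal side of `R j` contains that of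
`R i` (long sides decrease) and its vertical side lies inside that of `R i` (otherwise
`R i ⊆ R j`, against the selection condition). So on `R i` the multiplicity is bounded by that of a
one-dimensional family of dyadic intervals which is nested (a later interval contains every earlier
one it meets) and sparse (earlier intervals cover at most a third of each interval). In such a
family the intervals of nesting depth exactly `n` are disjoint, and the points of multiplicity
`≥ n + 2` lie in the parts of them covered by earlier intervals; hence each level set has at most a
third of the measure of the previous one, and summing `n ^ (k - 1)` against the level sets gives
the bound.
-/

open MeasureTheory Set
open scoped ENNReal Classical Finset

noncomputable section

def dyadic (p : ℤ × ℤ) : Set ℝ := dInt p.1 p.2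

lemma mem_dyadic_iff {x : ℝ} {p : ℤ × ℤ} : x ∈ dyadic p ↔ ⌊x / 2 ^ p.2⌋ = p.1 := by
  have h : (0 : ℝ) < 2 ^ p.2 := by positivity
  rw [Int.floor_eq_iff, le_div_iff₀ h, div_lt_iff₀ h]
  rfl

lemma Int.floor_div_two_zpow_of_le (y : ℝ) {k k' : ℤ} (hk : k ≤ k') :
    ⌊y / 2 ^ k'⌋ = ⌊y / 2 ^ k⌋ / 2 ^ (k' - k).toNat := by
  have h : (2 : ℝ) ^ k' = 2 ^ k * ((2 ^ (k' - k).toNat : ℕ) : ℝ) := by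
    rw [Nat.cast_pow, Nat.cast_ofNat, ← zpow_natCast, Int.toNat_of_nonneg (by omega),
      ← zpow_add₀ two_ne_zero, add_sub_cancel]
  rw [h, ← div_div, Int.floor_div_natCast]
  norm_cast

lemma dyadic_subset_of_le {p q : ℤ × ℤ} (hpq : p.2 ≤ q.2) {x : ℝ} (hp : x ∈ dyadic p)
    (hq : x ∈ dyadic q) : dyadic p ⊆ dyadic q := by
  intro y hy
  rw [mem_dyadic_iff] at *
  rw [Int.floor_div_two_zpow_of_le y hpq, hy, ← hp, ← Int.floor_div_two_zpow_of_le x hpq, hq]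

lemma dyadic_subset_or_subset {p q : ℤ × ℤ} {x : ℝ} (hp : x ∈ dyadic p) (hq : x ∈ dyadic q) :
    dyadic p ⊆ dyadic q ∨ dyadic q ⊆ dyadic p :=
  (le_total p.2 q.2).imp (dyadic_subset_of_le · hp hq) (dyadic_subset_of_le · hq hp)

lemma dyadic_nonempty (p : ℤ × ℤ) : (dyadic p).Nonempty :=
  ⟨p.1 * 2 ^ p.2, mem_dyadic_iff.2 (by field_simp; simp)⟩

lemma measurableSet_dyadic (p : ℤ × ℤ) : MeasurableSet (dyadic p) := measurableSet_Ico

lemma volume_dyadic (p : ℤ × ℤ) : volume (dyadic p) = ENNReal.ofReal (2 ^ p.2) := by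
  rw [dyadic, dInt, Real.volume_Ico]
  ring_nf

lemma volume_dyadic_ne_zero (p : ℤ × ℤ) : volume (dyadic p) ≠ 0 := by
  rw [volume_dyadic]; positivity

lemma volume_dyadic_ne_top (p : ℤ × ℤ) : volume (dyadic p) ≠ ∞ := by
  rw [volume_dyadic]; exact ENNReal.ofReal_ne_top

lemma Finset.exists_card_filter_lt_eq {ι : Type*} [LinearOrder ι] (s : Finset ι) :
    ∀ n, n + 1 < #s → ∃ e ∈ s, #{j ∈ s | e < j} = n ∧ ∃ j ∈ s, j < e := by
  induction s using Finset.induction_on_max with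
  | empty => simp
  | insert a s hlt ih =>
    have ha : a ∉ s := fun h => lt_irrefl a (hlt a h)
    rintro (_ | n) hn <;> rw [card_insert_of_notMem ha] at hn
    · obtain ⟨j, hj⟩ := card_pos.1 (by omega : 0 < #s)
      refine ⟨a, mem_insert_self a s, ?_, j, mem_insert_of_mem hj, hlt j hj⟩
      simp only [card_eq_zero, filter_eq_empty_iff, mem_insert]
      rintro j (rfl | hj)
      exacts [lt_irrefl j, (hlt j hj).not_gt]
    · obtain ⟨e, he, hcard, j, hj, hje⟩ := ih n (by omega)
      refine ⟨e, mem_insert_of_mem he, ?_, j, mem_insert_of_mem hj, hje⟩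
      rw [filter_insert, if_pos (hlt e he), card_insert_of_notMem (fun h => ha (mem_filter.1 h).1),
        hcard]

section NestedFamily

variable {ι α : Type*} [LinearOrder ι] (F : Finset ι) (J : ι → Set α)

def coverCount (y : α) : ℕ := #{j ∈ F | y ∈ J j}

def nestingDepth (e : ι) : ℕ := #{j ∈ F | e < j ∧ J e ⊆ J j}

variable {F J}

lemma nestingDepth_lt_coverCount {e : ι} (he : e ∈ F) {y : α} (hy : y ∈ J e) :
    nestingDepth F J e < coverCount F J y := by
  have hsub : insert e {j ∈ F | e < j ∧ J e ⊆ J j} ⊆ {j ∈ F | y ∈ J j} := by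
    intro j hj
    rcases Finset.mem_insert.1 hj with rfl | hj
    · exact Finset.mem_filter.2 ⟨he, hy⟩
    · obtain ⟨hjF, -, hsub⟩ := Finset.mem_filter.1 hj
      exact Finset.mem_filter.2 ⟨hjF, hsub hy⟩
  have := Finset.card_le_card hsub
  rwa [Finset.card_insert_of_notMem (by simp)] at this

variable (hnest : ∀ j ∈ F, ∀ e ∈ F, j < e → (J j ∩ J e).Nonempty → J j ⊆ J e)
include hnest

lemma nestingDepth_lt_of_lt {e e' : ι} (he : e ∈ F) (he' : e' ∈ F) (hlt : e < e')
    (hmeet : (J e ∩ J e').Nonempty) : nestingDepth F J e' < nestingDepth F J e := by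
  have hee' := hnest e he e' he' hlt hmeet
  have hsub : insert e' {j ∈ F | e' < j ∧ J e' ⊆ J j} ⊆ {j ∈ F | e < j ∧ J e ⊆ J j} := by
    intro j hj
    rcases Finset.mem_insert.1 hj with rfl | hj
    · exact Finset.mem_filter.2 ⟨he', hlt, hee'⟩
    · obtain ⟨hjF, hlt', hsub⟩ := Finset.mem_filter.1 hj
      exact Finset.mem_filter.2 ⟨hjF, hlt.trans hlt', hee'.trans hsub⟩
  have := Finset.card_le_card hsub
  rwa [Finset.card_insert_of_notMem (by simp)] at this

lemma pairwiseDisjoint_nestingDepth_eq (n : ℕ) :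
    (({e ∈ F | nestingDepth F J e = n} : Finset ι) : Set ι).PairwiseDisjoint J := by
  intro e he e' he' hne
  simp only [Finset.coe_filter] at he he'
  rw [Function.onFun, Set.disjoint_iff_inter_eq_empty, ← Set.not_nonempty_iff_eq_empty]
  intro hmeet
  rcases hne.lt_or_gt with hlt | hlt
  · exact (nestingDepth_lt_of_lt hnest he.1 he'.1 hlt hmeet).ne (he'.2.trans he.2.symm)
  · exact (nestingDepth_lt_of_lt hnest he'.1 he.1 hlt (Set.inter_comm _ _ ▸ hmeet)).ne
      (he.2.trans he'.2.symm)

lemma exists_nestingDepth_eq {n : ℕ} {y : α} (hy : n + 2 ≤ coverCount F J y) :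
    ∃ e ∈ F, nestingDepth F J e = n ∧ y ∈ J e ∧ ∃ j ∈ F, j < e ∧ y ∈ J j := by
  obtain ⟨e, he, hcard, j, hj, hje⟩ :=
    Finset.exists_card_filter_lt_eq {j ∈ F | y ∈ J j} n (by unfold coverCount at hy; omega)
  obtain ⟨heF, hye⟩ := Finset.mem_filter.1 he
  obtain ⟨hjF, hyj⟩ := Finset.mem_filter.1 hj
  refine ⟨e, heF, ?_, hye, j, hjF, hje, hyj⟩
  rw [← hcard, nestingDepth, Finset.filter_filter]
  refine congrArg Finset.card (Finset.filter_congr fun j hj => ?_)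
  exact ⟨fun h => ⟨h.2 hye, h.1⟩, fun h => ⟨h.2, hnest e heF j hj h.2 ⟨y, hye, h.1⟩⟩⟩

variable [MeasurableSpace α] {μ : Measure α} {c : ℝ≥0∞}
  (hJ : ∀ j ∈ F, MeasurableSet (J j))
  (hsparse : ∀ e ∈ F, μ (J e ∩ ⋃ j ∈ {j ∈ F | j < e}, J j) ≤ c * μ (J e))
include hJ hsparse

lemma measure_coverCount_succ_le (n : ℕ) :
    μ {y | n + 2 ≤ coverCount F J y} ≤ c * μ {y | n + 1 ≤ coverCount F J y} := by
  set A : Finset ι := {e ∈ F | nestingDepth F J e = n}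
  have hcover : {y | n + 2 ≤ coverCount F J y} ⊆ ⋃ e ∈ A, J e ∩ ⋃ j ∈ {j ∈ F | j < e}, J j := by
    intro y hy
    obtain ⟨e, heF, hdepth, hye, j, hjF, hje, hyj⟩ := exists_nestingDepth_eq hnest hy
    exact mem_iUnion₂.2 ⟨e, Finset.mem_filter.2 ⟨heF, hdepth⟩, hye,
      mem_iUnion₂.2 ⟨j, Finset.mem_filter.2 ⟨hjF, hje⟩, hyj⟩⟩
  have hdeep : (⋃ e ∈ A, J e) ⊆ {y | n + 1 ≤ coverCount F J y} := by
    refine iUnion₂_subset fun e he y hy => ?_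
    obtain ⟨heF, hdepth⟩ := Finset.mem_filter.1 he
    exact hdepth ▸ nestingDepth_lt_coverCount heF hy
  calc μ {y | n + 2 ≤ coverCount F J y}
      ≤ ∑ e ∈ A, μ (J e ∩ ⋃ j ∈ {j ∈ F | j < e}, J j) :=
        (measure_mono hcover).trans (measure_biUnion_finset_le _ _)
    _ ≤ ∑ e ∈ A, c * μ (J e) :=
        Finset.sum_le_sum fun e he => hsparse e (Finset.mem_filter.1 he).1
    _ = c * μ (⋃ e ∈ A, J e) := by
        rw [← Finset.mul_sum, measure_biUnion_finset (pairwiseDisjoint_nestingDepth_eq hnest n)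
          fun e he => hJ e (Finset.mem_filter.1 he).1]
    _ ≤ c * μ {y | n + 1 ≤ coverCount F J y} := by gcongr

lemma measure_coverCount_le (n : ℕ) :
    μ {y | n + 1 ≤ coverCount F J y} ≤ c ^ n * μ (⋃ j ∈ F, J j) := by
  induction n with
  | zero =>
    rw [pow_zero, one_mul]
    refine measure_mono fun y hy => ?_
    obtain ⟨j, hj⟩ := Finset.card_pos.1 (hy : 0 < coverCount F J y)
    exact mem_iUnion₂.2 ⟨j, (Finset.mem_filter.1 hj).1, (Finset.mem_filter.1 hj).2⟩
  | succ n ih =>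
    calc μ {y | n + 1 + 1 ≤ coverCount F J y}
        ≤ c * μ {y | n + 1 ≤ coverCount F J y} := measure_coverCount_succ_le hnest hJ hsparse n
      _ ≤ c * (c ^ n * μ (⋃ j ∈ F, J j)) := by gcongr
      _ = c ^ (n + 1) * μ (⋃ j ∈ F, J j) := by rw [← mul_assoc, pow_succ']

end NestedFamily

lemma setLIntegral_comp_eq_tsum {α : Type*} [MeasurableSpace α] {μ : Measure α} {f : α → ℕ}
    (hf : Measurable f) (φ : ℕ → ℝ≥0∞) (s : Set α) :
    ∫⁻ x in s, φ (f x) ∂μ = ∑' n, φ n * μ (s ∩ f ⁻¹' {n}) := by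
  rw [← lintegral_map (measurable_from_nat (f := φ)) hf, lintegral_countable']
  refine tsum_congr fun n => ?_
  rw [Measure.map_apply hf (measurableSet_singleton n),
    Measure.restrict_apply (hf (measurableSet_singleton n)), inter_comm]

lemma measurable_card_filter {α ι : Type*} [MeasurableSpace α] [Fintype ι] {p : ι → α → Prop}
    [∀ x, DecidablePred (p · x)] (hp : ∀ j, MeasurableSet {x | p j x}) :
    Measurable fun x => #{j | p j x} := by
  simp_rw [Finset.card_filter]
  exact Finset.measurable_sum _ fun j _ => Measurable.ite (hp j) measurable_const measurable_const

namespace DyadicRectangles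

variable {N : ℕ} {a b : Fin N → ℤ × ℤ} {R : Fin N → Set (ℝ × ℝ)}

lemma dyadic_subset_of_le_of_inter_nonempty (hmono : ∀ i j : Fin N, i ≤ j → (a j).2 ≤ (a i).2)
    {j e : Fin N} (hje : j ≤ e) (hmeet : (dyadic (a j) ∩ dyadic (a e)).Nonempty) :
    dyadic (a e) ⊆ dyadic (a j) :=
  let ⟨_, hj, he⟩ := hmeet
  dyadic_subset_of_le (hmono j e hje) he hj

lemma not_subset_of_lt
    (hsel : ∀ i : Fin N, 0 < (i : ℕ) →
      volume (R i ∩ ⋃ j : {j : Fin N // (j : ℕ) < (i : ℕ)}, R j) < 3⁻¹ * volume (R i))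
    {j e : Fin N} (hje : j < e) : ¬ R e ⊆ R j := by
  intro hsub
  have hsel_e := hsel e (Nat.zero_le _ |>.trans_lt hje)
  rw [inter_eq_left.2 (hsub.trans (subset_iUnion_of_subset ⟨j, hje⟩ subset_rfl))] at hsel_e
  exact (hsel_e.trans_le (mul_le_of_le_one_left zero_le (ENNReal.inv_le_one.2 (by norm_num)))).false

def crossing (a b : Fin N → ℤ × ℤ) (i : Fin N) : Finset (Fin N) :=
  Finset.univ.filter fun j => j ≤ i ∧ dyadic (a i) ⊆ dyadic (a j) ∧ dyadic (b j) ⊆ dyadic (b i)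

lemma mem_crossing {i j : Fin N} : j ∈ crossing a b i ↔
    j ≤ i ∧ dyadic (a i) ⊆ dyadic (a j) ∧ dyadic (b j) ⊆ dyadic (b i) := by
  simp [crossing]

variable (hR : ∀ i, R i = dyadic (a i) ×ˢ dyadic (b i))
  (hmono : ∀ i j : Fin N, i ≤ j → (a j).2 ≤ (a i).2)
  (hsel : ∀ i : Fin N, 0 < (i : ℕ) →
    volume (R i ∩ ⋃ j : {j : Fin N // (j : ℕ) < (i : ℕ)}, R j) < 3⁻¹ * volume (R i))
include hR hmono hsel

lemma dyadic_snd_subset_of_lt {j e : Fin N} (hje : j < e) (hmeet : (R j ∩ R e).Nonempty) :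
    dyadic (b j) ⊆ dyadic (b e) := by
  obtain ⟨x, hxj, hxe⟩ := hmeet
  rw [hR] at hxj hxe
  have hfst := dyadic_subset_of_le_of_inter_nonempty hmono hje.le ⟨x.1, hxj.1, hxe.1⟩
  refine (dyadic_subset_or_subset hxj.2 hxe.2).resolve_right fun hsnd => ?_
  exact not_subset_of_lt hsel hje (by rw [hR, hR]; exact prod_mono hfst hsnd)

lemma crossing_nested (i : Fin N) : ∀ j ∈ crossing a b i, ∀ e ∈ crossing a b i, j < e →
    (dyadic (b j) ∩ dyadic (b e)).Nonempty → dyadic (b j) ⊆ dyadic (b e) := by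
  intro j hj e he hje ⟨y, hyj, hye⟩
  obtain ⟨z, hz⟩ := dyadic_nonempty (a i)
  refine dyadic_snd_subset_of_lt hR hmono hsel hje ⟨(z, y), ?_, ?_⟩
  · rw [hR]; exact ⟨(mem_crossing.1 hj).2.1 hz, hyj⟩
  · rw [hR]; exact ⟨(mem_crossing.1 he).2.1 hz, hye⟩

lemma crossing_sparse (i : Fin N) : ∀ e ∈ crossing a b i,
    volume (dyadic (b e) ∩ ⋃ j ∈ {j ∈ crossing a b i | j < e}, dyadic (b j)) ≤
      3⁻¹ * volume (dyadic (b e)) := by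
  intro e he
  set U := ⋃ j ∈ {j ∈ crossing a b i | j < e}, dyadic (b j)
  rcases U.eq_empty_or_nonempty with hU | ⟨y₀, hy₀⟩
  · simp [hU]
  obtain ⟨j₀, hj₀, -⟩ := mem_iUnion₂.1 hy₀
  obtain ⟨z, hz⟩ := dyadic_nonempty (a i)
  have hprod : dyadic (a e) ×ˢ (dyadic (b e) ∩ U) ⊆
      R e ∩ ⋃ j : {j : Fin N // (j : ℕ) < (e : ℕ)}, R j := by
    rintro ⟨x, y⟩ ⟨hx, hye, hyU⟩
    obtain ⟨j, hj, hyj⟩ := mem_iUnion₂.1 hyU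
    obtain ⟨hjF, hje⟩ := Finset.mem_filter.1 hj
    have hfst : dyadic (a e) ⊆ dyadic (a j) := dyadic_subset_of_le_of_inter_nonempty hmono hje.le
      ⟨z, (mem_crossing.1 hjF).2.1 hz, (mem_crossing.1 he).2.1 hz⟩
    refine ⟨by rw [hR]; exact ⟨hx, hye⟩, mem_iUnion.2 ⟨⟨j, hje⟩, ?_⟩⟩
    rw [hR]; exact ⟨hfst hx, hyj⟩
  have hvol := (measure_mono hprod).trans (hsel e (Nat.zero_le _ |>.trans_lt
    (Finset.mem_filter.1 hj₀).2)).le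
  rw [hR, Measure.volume_eq_prod, Measure.prod_prod, Measure.prod_prod, mul_left_comm] at hvol
  exact (ENNReal.mul_le_mul_iff_right (volume_dyadic_ne_zero _) (volume_dyadic_ne_top _)).1 hvol

lemma card_le_coverCount_crossing {i : Fin N} {x : ℝ × ℝ} (hx : x ∈ R i) :
    (Finset.univ.filter fun j => j ≤ i ∧ x ∈ R j).card ≤
      coverCount (crossing a b i) (fun j => dyadic (b j)) x.2 := by
  refine Finset.card_le_card fun j hj => ?_
  obtain ⟨hji, hxj⟩ := (Finset.mem_filter.1 hj).2
  have hxi' : x ∈ dyadic (a i) ×ˢ dyadic (b i) := hR i ▸ hx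
  have hxj' : x ∈ dyadic (a j) ×ˢ dyadic (b j) := hR j ▸ hxj
  refine Finset.mem_filter.2 ⟨mem_crossing.2 ⟨hji, ?_, ?_⟩, hxj'.2⟩
  · exact dyadic_subset_of_le_of_inter_nonempty hmono hji ⟨x.1, hxj'.1, hxi'.1⟩
  · rcases hji.eq_or_lt with rfl | hlt
    · exact subset_rfl
    · exact dyadic_snd_subset_of_lt hR hmono hsel hlt ⟨x, hxj, hx⟩

lemma volume_inter_le_card_filter_le (i : Fin N) (n : ℕ) :
    volume (R i ∩ {x | n + 1 ≤ (Finset.univ.filter fun j => j ≤ i ∧ x ∈ R j).card}) ≤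
      3⁻¹ ^ n * volume (R i) := by
  set J : Fin N → Set ℝ := fun j => dyadic (b j)
  calc volume (R i ∩ {x | n + 1 ≤ (Finset.univ.filter fun j => j ≤ i ∧ x ∈ R j).card})
      ≤ volume (dyadic (a i) ×ˢ {y | n + 1 ≤ coverCount (crossing a b i) J y}) :=
        measure_mono fun x ⟨hx, hn⟩ =>
          ⟨(hR i ▸ hx).1, hn.trans (card_le_coverCount_crossing hR hmono hsel hx)⟩
    _ = volume (dyadic (a i)) * volume {y | n + 1 ≤ coverCount (crossing a b i) J y} := by
        rw [Measure.volume_eq_prod, Measure.prod_prod]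
    _ ≤ volume (dyadic (a i)) * (3⁻¹ ^ n * volume (⋃ j ∈ crossing a b i, J j)) := by
        gcongr
        exact measure_coverCount_le (crossing_nested hR hmono hsel i)
          (fun j _ => measurableSet_dyadic (b j)) (crossing_sparse hR hmono hsel i) n
    _ ≤ volume (dyadic (a i)) * (3⁻¹ ^ n * volume (J i)) := by
        gcongr
        exact iUnion₂_subset fun j hj => (mem_crossing.1 hj).2.2
    _ = 3⁻¹ ^ n * volume (R i) := by
        rw [hR, Measure.volume_eq_prod, Measure.prod_prod, mul_left_comm]

end DyadicRectangles

theorem dyadic_multiplicity_integral_bound_general (N : ℕ) (a b : Fin N → ℤ × ℤ)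
    (R : Fin N → Set (ℝ × ℝ))
    (hR : ∀ i, R i = dInt (a i).1 (a i).2 ×ˢ dInt (b i).1 (b i).2)
    (hmono : ∀ i j : Fin N, i ≤ j → (a j).2 ≤ (a i).2)
    (hsel : ∀ i : Fin N, 0 < (i : ℕ) →
      volume (R i ∩ ⋃ j : {j : Fin N // (j : ℕ) < (i : ℕ)}, R j) < 3⁻¹ * volume (R i)) :
    ∀ (i : Fin N) (k : ℕ), 1 ≤ k →
      (∫⁻ x in R i,
          ((Finset.univ.filter fun j : Fin N => j ≤ i ∧ x ∈ R j).card : ℝ≥0∞) ^ (k - 1)) ≤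
        volume (R i) * ∑' n : ℕ, ((n : ℝ≥0∞) + 1) ^ (k - 1) * (3 : ℝ≥0∞) ^ (1 - ((n : ℤ) + 1)) := by
  intro i k _
  set count : ℝ × ℝ → ℕ := fun x => (Finset.univ.filter fun j : Fin N => j ≤ i ∧ x ∈ R j).card
  have hR' : ∀ j, MeasurableSet (R j) := fun j =>
    hR j ▸ (measurableSet_dyadic (a j)).prod (measurableSet_dyadic (b j))
  have hcount : Measurable count :=
    measurable_card_filter fun j => (MeasurableSet.const _).inter (hR' j)
  have hcount_zero : R i ∩ count ⁻¹' {0} = ∅ := by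
    refine eq_empty_of_forall_notMem fun x ⟨hx, hx0⟩ => ?_
    exact Finset.card_ne_zero_of_mem (Finset.mem_filter.2 ⟨Finset.mem_univ i, le_rfl, hx⟩) hx0
  calc ∫⁻ x in R i, (count x : ℝ≥0∞) ^ (k - 1)
      = ∑' n, ((n + 1 : ℕ) : ℝ≥0∞) ^ (k - 1) * volume (R i ∩ count ⁻¹' {n + 1}) := by
        rw [setLIntegral_comp_eq_tsum hcount (fun n => (n : ℝ≥0∞) ^ (k - 1)),
          tsum_eq_zero_add' ENNReal.summable, hcount_zero, measure_empty, mul_zero, zero_add]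
    _ ≤ ∑' n : ℕ, ((n : ℝ≥0∞) + 1) ^ (k - 1) * (3⁻¹ ^ n * volume (R i)) := by
        refine ENNReal.tsum_le_tsum fun n => ?_
        push_cast
        gcongr
        exact (measure_mono (inter_subset_inter_right _ fun _ hx => Eq.ge hx)).trans
          (DyadicRectangles.volume_inter_le_card_filter_le hR hmono hsel i n)
    _ = volume (R i) * ∑' n : ℕ, ((n : ℝ≥0∞) + 1) ^ (k - 1) * (3 : ℝ≥0∞) ^ (1 - ((n : ℤ) + 1)) := by
        rw [← ENNReal.tsum_mul_left]
        refine tsum_congr fun n => ?_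
        rw [show (1 : ℤ) - (n + 1) = -n by ring, ENNReal.zpow_neg, zpow_natCast, ENNReal.inv_pow]
        ring

/-- Integral multiplicity bound: under the hypotheses of the selection of dyadic
rectangles (non-increasing long sides in the `x₁`-direction, overlap with previous
rectangles less than a third of the measure), for every `k ≥ 1`,
`∫_{R_i} (Σ_{j≤i} 𝟙_{R_j})^{k-1} ≤ |R_i| Σ_{n=1}^∞ n^{k-1} 3^{1-n}`
(the series indexed by `n = n'+1`). -/
theorem dyadic_multiplicity_integral_bound (N : ℕ) (a b : Fin N → ℤ × ℤ)
    (R : Fin N → Set (ℝ × ℝ))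
    (hR : ∀ i, R i = dInt (a i).1 (a i).2 ×ˢ dInt (b i).1 (b i).2)
    (hlong : ∀ i, (b i).2 ≤ (a i).2)
    (hmono : ∀ i j : Fin N, i ≤ j → (a j).2 ≤ (a i).2)
    (hsel : ∀ i : Fin N, 0 < (i : ℕ) →
      volume (R i ∩ ⋃ j : {j : Fin N // (j : ℕ) < (i : ℕ)}, R j) < 3⁻¹ * volume (R i)) :
    ∀ (i : Fin N) (k : ℕ), 1 ≤ k →
      (∫⁻ x in R i,
          ((Finset.univ.filter fun j : Fin N => j ≤ i ∧ x ∈ R j).card : ℝ≥0∞) ^ (k - 1)) ≤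
        volume (R i) * ∑' n : ℕ, ((n : ℝ≥0∞) + 1) ^ (k - 1) * (3 : ℝ≥0∞) ^ (1 - ((n : ℤ) + 1)) :=
  dyadic_multiplicity_integral_bound_general N a b R hR hmono hsel
end
end
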